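/- Let Ĝ and G be finite groups and π : Ĝ → G a surjective homomorphism whose kernel is a characteristic subgroup of Ĝ; let ζ : MulAut Ĝ → MulAut G be the unique homomorphism with ζ(ψ) ∘ π = π ∘ ψ for all ψ. Let r̂ : Fin m̂ → FreeGroup (Fin n) be a presentation P̂ of Ĝ having some presentation n-tuple â, and r : Fin m → FreeGroup (Fin n) a presentation P of G such that π ∘ â is a presentation n-tuple of P. Then ζ is surjective if and only if for every presentation n-tuple b of P there exists a presentation n-tuple b̂ of P̂ with π ∘ b̂ = b. -/

import Mathlib

/-!
Any two presentation `n`-tuples of a presentation of a finite group `G` kill the same normal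
subgroup of the free group, because a surjection of a finite group onto itself is bijective;
hence they differ by a unique automorphism of `G`. Transporting `π ∘ â` to an arbitrary tuple `b`
by some `α ∈ MulAut G` and lifting `α` through `ζ` to `ψ` yields the lift `ψ ∘ â` of `b`.
Conversely, the lift `b̂` of `α ∘ π ∘ â` differs from `â` by some `ψ ∈ MulAut Ĝ`, and `ζ ψ` and
`α` agree on the generators `π ∘ â` of `G`.
-/

theorem FreeGroup.lift_comp_eq_comp_lift {α G H : Type*} [Group G] [Group H]
    (φ : G →* H) (a : α → G) : FreeGroup.lift (φ ∘ a) = φ.comp (FreeGroup.lift a) :=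
  FreeGroup.ext_hom _ _ fun _ => by simp

theorem MonoidHom.exists_mulEquiv_comp_eq_of_ker_le {F G : Type*} [Group F] [Group G]
    [Finite G] {f g : F →* G} (hf : Function.Surjective f) (hg : Function.Surjective g)
    (hker : f.ker ≤ g.ker) : ∃ e : G ≃* G, (e : G →* G).comp f = g := by
  set φ : G →* G := f.liftOfSurjective hf ⟨g, hker⟩
  have hφf : φ.comp f = g := f.liftOfRightInverse_comp _ _ ⟨g, hker⟩
  have hφ : Function.Surjective φ := .of_comp (hφf ▸ hg : Function.Surjective (φ.comp f))
  exact ⟨.ofBijective φ ⟨Finite.injective_iff_surjective.mpr hφ, hφ⟩, hφf⟩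

theorem MonoidHom.eq_of_eq_on_generators {α G H : Type*} [Group G] [Group H] {a : α → G}
    (ha : Function.Surjective (FreeGroup.lift a)) {φ ψ : G →* H} (h : ∀ j, φ (a j) = ψ (a j)) :
    φ = ψ :=
  (MonoidHom.cancel_right ha).mp (FreeGroup.ext_hom _ _ fun j => by simpa using h j)

section PresentationTuple

variable {ι κ G : Type*} [Group G]

def IsPresentationTuple (r : κ → FreeGroup ι) (a : ι → G) : Prop :=
  Function.Surjective (FreeGroup.lift a) ∧ ∀ k, FreeGroup.lift a (r k) = 1

theorem IsPresentationTuple.map_mulEquiv {r : κ → FreeGroup ι} {a : ι → G}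
    (ha : IsPresentationTuple r a) (e : G ≃* G) : IsPresentationTuple r (e ∘ a) := by
  change IsPresentationTuple r ((e : G →* G) ∘ a)
  rw [IsPresentationTuple, FreeGroup.lift_comp_eq_comp_lift]
  exact ⟨e.surjective.comp ha.1, fun k => by simp [ha.2 k]⟩

theorem IsPresentationTuple.ker_eq [Finite G] {r : κ → FreeGroup ι}
    (hP : ∃ f : FreeGroup ι →* G, Function.Surjective f ∧
      f.ker = Subgroup.normalClosure (Set.range r))
    {a : ι → G} (ha : IsPresentationTuple r a) :
    (FreeGroup.lift a).ker = Subgroup.normalClosure (Set.range r) := by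
  obtain ⟨f, hf, hfker⟩ := hP
  have hle : f.ker ≤ (FreeGroup.lift a).ker :=
    hfker ▸ Subgroup.normalClosure_le_normal (Set.range_subset_iff.mpr ha.2)
  obtain ⟨e, he⟩ := MonoidHom.exists_mulEquiv_comp_eq_of_ker_le hf ha.1 hle
  rw [← hfker, ← he, MonoidHom.ker_comp_of_injective _ _ e.injective]

theorem IsPresentationTuple.exists_mulEquiv [Finite G] {r : κ → FreeGroup ι}
    (hP : ∃ f : FreeGroup ι →* G, Function.Surjective f ∧
      f.ker = Subgroup.normalClosure (Set.range r))
    {a b : ι → G} (ha : IsPresentationTuple r a) (hb : IsPresentationTuple r b) :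
    ∃ e : G ≃* G, e ∘ a = b := by
  obtain ⟨e, he⟩ := MonoidHom.exists_mulEquiv_comp_eq_of_ker_le ha.1 hb.1
    (ha.ker_eq hP ▸ hb.ker_eq hP ▸ le_rfl)
  exact ⟨e, funext fun j => by simpa using DFunLike.congr_fun he (FreeGroup.of j)⟩

end PresentationTuple

theorem stmt_4_general {Ghat G : Type*} [Group Ghat] [Group G] [Finite Ghat] [Finite G]
    (π : Ghat →* G)
    (ζ : MulAut Ghat →* MulAut G)
    (hζ : ∀ (ψ : MulAut Ghat) (g : Ghat), ζ ψ (π g) = π (ψ g))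
    {n mhat m : ℕ} (rhat : Fin mhat → FreeGroup (Fin n)) (r : Fin m → FreeGroup (Fin n))
    (hPhat : ∃ f : FreeGroup (Fin n) →* Ghat, Function.Surjective f ∧
      f.ker = Subgroup.normalClosure (Set.range rhat))
    (hP : ∃ f : FreeGroup (Fin n) →* G, Function.Surjective f ∧
      f.ker = Subgroup.normalClosure (Set.range r))
    (ahat : Fin n → Ghat)
    (hahat : Function.Surjective (FreeGroup.lift ahat) ∧
      ∀ k, FreeGroup.lift ahat (rhat k) = 1)
    (hπahat : Function.Surjective (FreeGroup.lift (π ∘ ahat)) ∧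
      ∀ k, FreeGroup.lift (π ∘ ahat) (r k) = 1) :
    Function.Surjective ζ ↔
      ∀ b : Fin n → G,
        (Function.Surjective (FreeGroup.lift b) ∧ ∀ k, FreeGroup.lift b (r k) = 1) →
        ∃ bhat : Fin n → Ghat,
          (Function.Surjective (FreeGroup.lift bhat) ∧
            ∀ k, FreeGroup.lift bhat (rhat k) = 1) ∧ π ∘ bhat = b := by
  have hζa : ∀ ψ : MulAut Ghat, ζ ψ ∘ π ∘ ahat = π ∘ ψ ∘ ahat := fun ψ =>
    funext fun j => hζ ψ (ahat j)
  constructor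
  · intro hζsurj b hb
    obtain ⟨α, hα⟩ := IsPresentationTuple.exists_mulEquiv hP hπahat hb
    obtain ⟨ψ, rfl⟩ := hζsurj α
    exact ⟨ψ ∘ ahat, IsPresentationTuple.map_mulEquiv hahat ψ, by rw [← hα, hζa]⟩
  · intro hlift α
    obtain ⟨bhat, hbhat, hπbhat⟩ :=
      hlift (α ∘ π ∘ ahat) (IsPresentationTuple.map_mulEquiv hπahat α)
    obtain ⟨ψ, hψ⟩ := IsPresentationTuple.exists_mulEquiv hPhat hahat hbhat
    refine ⟨ψ, MulEquiv.toMonoidHom_injective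
      (MonoidHom.eq_of_eq_on_generators hπahat.1 fun j => ?_)⟩
    exact congrFun (show ζ ψ ∘ π ∘ ahat = α ∘ π ∘ ahat by rw [hζa, hψ, hπbhat]) j

/-- Theorem `sizeker` (c): `ζ` is surjective iff every presentation tuple of
`P` lifts via `π` to a presentation tuple of `P̂`. -/
theorem stmt_4 {Ghat G : Type*} [Group Ghat] [Group G] [Finite Ghat] [Finite G]
    (π : Ghat →* G) (hπ : Function.Surjective π) (hchar : π.ker.Characteristic)
    (ζ : MulAut Ghat →* MulAut G)
    (hζ : ∀ (ψ : MulAut Ghat) (g : Ghat), ζ ψ (π g) = π (ψ g))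
    {n mhat m : ℕ} (rhat : Fin mhat → FreeGroup (Fin n)) (r : Fin m → FreeGroup (Fin n))
    (hPhat : ∃ f : FreeGroup (Fin n) →* Ghat, Function.Surjective f ∧
      f.ker = Subgroup.normalClosure (Set.range rhat))
    (hP : ∃ f : FreeGroup (Fin n) →* G, Function.Surjective f ∧
      f.ker = Subgroup.normalClosure (Set.range r))
    (ahat : Fin n → Ghat)
    (hahat : Function.Surjective (FreeGroup.lift ahat) ∧
      ∀ k, FreeGroup.lift ahat (rhat k) = 1)
    (hπahat : Function.Surjective (FreeGroup.lift (π ∘ ahat)) ∧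
      ∀ k, FreeGroup.lift (π ∘ ahat) (r k) = 1) :
    Function.Surjective ζ ↔
      ∀ b : Fin n → G,
        (Function.Surjective (FreeGroup.lift b) ∧ ∀ k, FreeGroup.lift b (r k) = 1) →
        ∃ bhat : Fin n → Ghat,
          (Function.Surjective (FreeGroup.lift bhat) ∧
            ∀ k, FreeGroup.lift bhat (rhat k) = 1) ∧ π ∘ bhat = b :=
  stmt_4_general π ζ hζ rhat r hPhat hP ahat hahat hπahat
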